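/- Let N ≥ 1 be an integer and let g be a complex quartic coupling on ℂ^N satisfying the one-loop fixed-point equation of bosonic QED at the nontrivial gauge coupling, namely ((N+18)/N) · g_{ijkl} = P(g ♭ g + 4 · g ♯ g)_{ijkl} + (54/N²) · T_{ijkl} for all i,j,k,l, where T_{ijkl} = (δ_{ik}δ_{jl} + δ_{il}δ_{jk})/2. Then N ≥ 90 + 24√15; in particular N ≥ 183, i.e. there are no such fixed points with fewer than 183 flavors. -/

import Mathlib

/-- `(g ♭ h)_{ijkl} = ∑_{m,n} g_{ijmn} h_{mnkl}`. -/
noncomputable def cflat {N : ℕ} (g h : Fin N → Fin N → Fin N → Fin N → ℂ) :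
    Fin N → Fin N → Fin N → Fin N → ℂ :=
  fun i j k l => ∑ m : Fin N, ∑ n : Fin N, g i j m n * h m n k l

/-- `(g ♯ h)_{ijkl} = ∑_{m,n} g_{imkn} h_{jnlm}`. -/
noncomputable def csharp {N : ℕ} (g h : Fin N → Fin N → Fin N → Fin N → ℂ) :
    Fin N → Fin N → Fin N → Fin N → ℂ :=
  fun i j k l => ∑ m : Fin N, ∑ n : Fin N, g i m k n * h j n l m

/-- `P(A)_{ijkl} = (A_{ijkl} + A_{jikl} + A_{ijlk} + A_{jilk})/4`. -/
noncomputable def cP {N : ℕ} (A : Fin N → Fin N → Fin N → Fin N → ℂ) :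
    Fin N → Fin N → Fin N → Fin N → ℂ :=
  fun i j k l => (A i j k l + A j i k l + A i j l k + A j i l k) / 4

/-- `‖g‖² = ∑_{i,j,k,l} |g_{ijkl}|²`. -/
noncomputable def csqnorm {N : ℕ} (g : Fin N → Fin N → Fin N → Fin N → ℂ) : ℝ :=
  ∑ i : Fin N, ∑ j : Fin N, ∑ k : Fin N, ∑ l : Fin N, ‖g i j k l‖ ^ 2

/-- A complex quartic coupling on `ℂ^N`: symmetric under `i ↔ j` and `k ↔ l`,
and satisfying the reality condition `conj g_{ijkl} = g_{klij}`. -/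
def IsCplxCoupling {N : ℕ} (g : Fin N → Fin N → Fin N → Fin N → ℂ) : Prop :=
  (∀ i j k l, g i j k l = g j i k l) ∧ (∀ i j k l, g i j k l = g i j l k) ∧
    (∀ i j k l, (starRingEnd ℂ) (g i j k l) = g k l i j)

/-- The complex one-loop fixed point equation `g = P(g ♭ g + 4 g ♯ g)`. -/
def IsCplxFixedPoint {N : ℕ} (g : Fin N → Fin N → Fin N → Fin N → ℂ) : Prop :=
  IsCplxCoupling g ∧
    ∀ i j k l, g i j k l =
      cP (fun a b c d => cflat g g a b c d + 4 * csharp g g a b c d) i j k l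

/-- `T_{ijkl} = (δ_{ik}δ_{jl} + δ_{il}δ_{jk})/2`. -/
noncomputable def Tdelta {N : ℕ} : Fin N → Fin N → Fin N → Fin N → ℂ :=
  fun i j k l =>
    ((if i = k then (1 : ℂ) else 0) * (if j = l then (1 : ℂ) else 0)
      + (if i = l then (1 : ℂ) else 0) * (if j = k then (1 : ℂ) else 0)) / 2

/-!
Contract the fixed-point equation with `δ_{ik} δ_{jl}`. Writing `t = ∑ g_{ijij}` (real by the
reality condition) and `B_{mn} = ∑_i g_{imin}`, the symmetries reduce the contraction of
`P(g ♭ g + 4 g ♯ g)` to `3‖g‖² + 2‖B‖²`, so that `(N + 18) t = 3N‖g‖² + 2N‖B‖² + 27(N + 1)`.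
Two Cauchy–Schwarz estimates bound the right side from below: `t² ≤ N‖B‖²`, since `t` is the
trace of `B`, and `2t² ≤ (N² + N)‖g‖²`, since for `i ≠ j` both `g_{ijij}` and `g_{ijji} = g_{ijij}`
contribute to `‖g‖²`. Hence `(2N + 8) t² - (N + 18)(N + 1) t + 27(N + 1)² ≤ 0`; this quadratic in
`t` has a real root only if its discriminant is nonnegative, i.e. `N² ≥ 180 N + 540`.
-/

open Finset ComplexConjugate

section

variable {N : ℕ}

noncomputable def ctrace (g : Fin N → Fin N → Fin N → Fin N → ℂ) : ℝ :=
  ∑ i, ∑ j, (g i j i j).re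

noncomputable def cpartialTrace (g : Fin N → Fin N → Fin N → Fin N → ℂ) (m n : Fin N) : ℂ :=
  ∑ i, g i m i n

noncomputable def cpartialTraceSqNorm (g : Fin N → Fin N → Fin N → Fin N → ℂ) : ℝ :=
  ∑ m, ∑ n, ‖cpartialTrace g m n‖ ^ 2

theorem sum_mul_conj_eq_csqnorm (g : Fin N → Fin N → Fin N → Fin N → ℂ) :
    ∑ i, ∑ j, ∑ k, ∑ l, g i j k l * conj (g i j k l) = csqnorm g := by
  simp [csqnorm, Complex.mul_conj']

theorem cflat_swap_left {g : Fin N → Fin N → Fin N → Fin N → ℂ}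
    (hg : ∀ i j k l, g i j k l = g j i k l) (h : Fin N → Fin N → Fin N → Fin N → ℂ)
    (i j k l : Fin N) : cflat g h j i k l = cflat g h i j k l := by
  simp only [cflat, hg j i]

theorem cflat_swap_right (g : Fin N → Fin N → Fin N → Fin N → ℂ)
    {h : Fin N → Fin N → Fin N → Fin N → ℂ} (hh : ∀ i j k l, h i j k l = h i j l k)
    (i j k l : Fin N) : cflat g h i j l k = cflat g h i j k l := by
  simp only [cflat, hh _ _ l k]

theorem csharp_swap_swap (g h : Fin N → Fin N → Fin N → Fin N → ℂ) (i j k l : Fin N) :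
    csharp g h j i l k = csharp h g i j k l := by
  rw [csharp, csharp, sum_comm]
  simp only [mul_comm]

theorem sum_Tdelta_diag : ∑ i : Fin N, ∑ j : Fin N, Tdelta i j i j = ((N : ℂ) ^ 2 + N) / 2 := by
  simp only [Tdelta, ↓reduceIte, mul_one, mul_ite, mul_zero, ← sum_div, sum_add_distrib,
    sum_const, card_univ, Fintype.card_fin, nsmul_eq_mul, sum_ite_eq', mem_univ]
  ring

theorem sq_ctrace_le_mul_cpartialTraceSqNorm (g : Fin N → Fin N → Fin N → Fin N → ℂ) :
    ctrace g ^ 2 ≤ N * cpartialTraceSqNorm g := by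
  have htrace : ctrace g = ∑ m, (cpartialTrace g m m).re := by
    rw [ctrace, sum_comm]
    simp [cpartialTrace]
  calc ctrace g ^ 2 ≤ N * ∑ m, (cpartialTrace g m m).re ^ 2 := by
        simpa [htrace] using sq_sum_le_card_mul_sum_sq (s := univ)
          (f := fun m => (cpartialTrace g m m).re)
    _ ≤ N * ∑ m, ‖cpartialTrace g m m‖ ^ 2 := by
        refine mul_le_mul_of_nonneg_left (sum_le_sum fun m _ => ?_) N.cast_nonneg
        exact sq_le_sq.mpr ((Complex.abs_re_le_norm _).trans (le_abs_self _))
    _ ≤ N * cpartialTraceSqNorm g := by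
        refine mul_le_mul_of_nonneg_left (sum_le_sum fun m _ => ?_) N.cast_nonneg
        exact single_le_sum (f := fun n => ‖cpartialTrace g m n‖ ^ 2)
          (fun n _ => sq_nonneg _) (mem_univ m)

theorem sq_re_le_mul_sum_sq_norm {g : Fin N → Fin N → Fin N → Fin N → ℂ}
    (hg : ∀ i j k l, g i j k l = g i j l k) (i j : Fin N) :
    (g i j i j).re ^ 2 ≤ (1 + if i = j then 1 else 0) / 2 * ∑ k, ∑ l, ‖g i j k l‖ ^ 2 := by
  have hre : (g i j i j).re ^ 2 ≤ ‖g i j i j‖ ^ 2 :=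
    sq_le_sq.mpr ((Complex.abs_re_le_norm _).trans (le_abs_self _))
  have hrow : ∀ k l, ‖g i j k l‖ ^ 2 ≤ ∑ l', ‖g i j k l'‖ ^ 2 := fun k l =>
    single_le_sum (f := fun l' => ‖g i j k l'‖ ^ 2) (fun _ _ => sq_nonneg _) (mem_univ l)
  have hrow_nonneg : ∀ k ∈ univ, 0 ≤ ∑ l, ‖g i j k l‖ ^ 2 := fun k _ =>
    sum_nonneg fun _ _ => sq_nonneg _
  split_ifs with hij
  · subst hij
    have := single_le_sum hrow_nonneg (mem_univ i)
    linarith [hrow i i]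
  · have hpair := add_le_sum hrow_nonneg (mem_univ i) (mem_univ j) hij
    have hswap : ‖g i j j i‖ ^ 2 = ‖g i j i j‖ ^ 2 := by rw [hg i j j i]
    linarith [hrow i j, hrow j i, hswap]

theorem two_mul_sq_ctrace_le_mul_csqnorm {g : Fin N → Fin N → Fin N → Fin N → ℂ}
    (hg : ∀ i j k l, g i j k l = g i j l k) :
    2 * ctrace g ^ 2 ≤ ((N : ℝ) ^ 2 + N) * csqnorm g := by
  have hcs := sum_sq_le_sum_mul_sum_of_sq_le_mul (univ ×ˢ univ)
    (r := fun p : Fin N × Fin N => (g p.1 p.2 p.1 p.2).re)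
    (f := fun p => (1 + if p.1 = p.2 then 1 else 0) / 2)
    (g := fun p => ∑ k, ∑ l, ‖g p.1 p.2 k l‖ ^ 2)
    (fun _ _ => by positivity) (fun _ _ => by positivity)
    (fun p _ => sq_re_le_mul_sum_sq_norm hg p.1 p.2)
  have hweights : ∑ i : Fin N, ∑ j : Fin N, (1 + if i = j then (1 : ℝ) else 0) / 2
      = ((N : ℝ) ^ 2 + N) / 2 := by
    simp only [← sum_div, sum_add_distrib, sum_const, card_univ, Fintype.card_fin, nsmul_eq_mul,
      mul_one, sum_ite_eq, mem_univ, ↓reduceIte]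
    ring
  simp only [sum_product, hweights] at hcs
  rw [ctrace, csqnorm]
  linarith

namespace IsCplxCoupling

variable {g : Fin N → Fin N → Fin N → Fin N → ℂ}

theorem sum_diag_eq_ctrace (hg : IsCplxCoupling g) :
    ∑ i, ∑ j, g i j i j = ctrace g := by
  simp only [ctrace, Complex.ofReal_sum]
  exact sum_congr rfl fun i _ => sum_congr rfl fun j _ =>
    (Complex.conj_eq_iff_re.mp (hg.2.2 i j i j)).symm

theorem sum_cflat_diag (hg : IsCplxCoupling g) :
    ∑ i, ∑ j, cflat g g i j i j = csqnorm g := by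
  rw [← sum_mul_conj_eq_csqnorm]
  simp only [cflat, hg.2.2]

theorem sum_csharp_cross (hg : IsCplxCoupling g) :
    ∑ i, ∑ j, csharp g g i j j i = csqnorm g := by
  rw [← sum_mul_conj_eq_csqnorm]
  simp only [csharp, hg.2.2]
  exact sum_congr rfl fun i _ => sum_comm

theorem conj_cpartialTrace (hg : IsCplxCoupling g) (m n : Fin N) :
    conj (cpartialTrace g m n) = cpartialTrace g n m := by
  simp only [cpartialTrace, map_sum, hg.2.2]

theorem sum_csharp_diag (hg : IsCplxCoupling g) :
    ∑ i, ∑ j, csharp g g i j i j = cpartialTraceSqNorm g := by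
  simp only [cpartialTraceSqNorm, Complex.ofReal_sum, Complex.ofReal_pow, ← Complex.mul_conj',
    hg.conj_cpartialTrace]
  simp only [cpartialTrace, csharp, sum_mul_sum]
  rw [sum_comm_cycle]
  exact sum_congr rfl fun m _ => sum_comm_cycle

theorem cP_diag (hg : IsCplxCoupling g) (i j : Fin N) :
    cP (fun a b c d => cflat g g a b c d + 4 * csharp g g a b c d) i j i j
      = cflat g g i j i j + 2 * csharp g g i j i j + 2 * csharp g g i j j i := by
  have h₁ := cflat_swap_left hg.1 g i j i j
  have h₂ := cflat_swap_right g hg.2.1 i j i j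
  have h₃ := cflat_swap_left hg.1 g i j j i
  rw [cP, h₁, h₃, h₂, csharp_swap_swap g g i j i j, csharp_swap_swap g g i j j i]
  ring

theorem sum_cP_diag (hg : IsCplxCoupling g) :
    ∑ i, ∑ j, cP (fun a b c d => cflat g g a b c d + 4 * csharp g g a b c d) i j i j
      = 3 * csqnorm g + 2 * cpartialTraceSqNorm g := by
  simp only [hg.cP_diag, sum_add_distrib, ← mul_sum, hg.sum_cflat_diag, hg.sum_csharp_diag,
    hg.sum_csharp_cross]
  ring

theorem traced_fixedPoint (hg : IsCplxCoupling g) (hN : 0 < N)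
    (hfp : ∀ i j k l, (((N : ℂ) + 18) / (N : ℂ)) * g i j k l =
      cP (fun a b c d => cflat g g a b c d + 4 * csharp g g a b c d) i j k l
        + 54 / (N : ℂ) ^ 2 * Tdelta i j k l) :
    ((N : ℝ) + 18) * ctrace g
      = 3 * N * csqnorm g + 2 * N * cpartialTraceSqNorm g + 27 * (N + 1) := by
  have htraced := Fintype.sum_congr _ _ fun i => Fintype.sum_congr _ _ fun j => hfp i j i j
  simp only [sum_add_distrib, ← mul_sum, hg.sum_diag_eq_ctrace, hg.sum_cP_diag,
    sum_Tdelta_diag] at htraced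
  have hN' : (N : ℂ) ≠ 0 := by exact_mod_cast hN.ne'
  field_simp at htraced
  have hreal : ((N : ℝ) + 18) * ctrace g * 2
      = N * 2 * (3 * csqnorm g + 2 * cpartialTraceSqNorm g) + 54 * (N + 1) := by
    exact_mod_cast htraced
  linarith

end IsCplxCoupling

theorem le_sq_of_traced_fixedPoint {n t q b : ℝ} (hn : 0 < n)
    (heq : (n + 18) * t = 3 * n * q + 2 * n * b + 27 * (n + 1))
    (hq : 2 * t ^ 2 ≤ (n ^ 2 + n) * q) (hb : t ^ 2 ≤ n * b) :
    180 * n + 540 ≤ n ^ 2 := by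
  have hroot : (2 * n + 8) * t ^ 2 - (n + 18) * (n + 1) * t + 27 * (n + 1) ^ 2 ≤ 0 := by
    nlinarith
  have hdiscrim : 4 * (2 * n + 8) * (27 * (n + 1) ^ 2) ≤ ((n + 18) * (n + 1)) ^ 2 := by
    nlinarith [sq_nonneg (2 * (2 * n + 8) * t - (n + 18) * (n + 1))]
  nlinarith [sq_nonneg (n + 1)]

theorem ninety_add_le_of_le_sq {n : ℝ} (hn : 0 ≤ n) (h : 180 * n + 540 ≤ n ^ 2) :
    90 + 24 * √15 ≤ n := by
  have h15 := Real.sq_sqrt (show (0 : ℝ) ≤ 15 by norm_num)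
  have h90 : 90 ≤ n := by nlinarith
  nlinarith [Real.sqrt_nonneg 15]

theorem le_183_of_le_sq {N : ℕ} (h : 180 * (N : ℝ) + 540 ≤ (N : ℝ) ^ 2) : 183 ≤ N := by
  by_contra! hlt
  have : (N : ℝ) ≤ 182 := by exact_mod_cast Nat.le_of_lt_succ hlt
  nlinarith

end

/-- if a complex quartic coupling `g` on `ℂ^N` satisfies the
one-loop fixed-point equation of bosonic QED at the nontrivial gauge coupling,
`((N+18)/N) g = P(g ♭ g + 4 g ♯ g) + (54/N²) T`, then `N ≥ 90 + 24√15`;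
in particular `N ≥ 183`: there are no such fixed points with fewer than 183
flavors. -/
theorem bosonicQED_flavor_bound {N : ℕ} (hN : 1 ≤ N)
    (g : Fin N → Fin N → Fin N → Fin N → ℂ) (hg : IsCplxCoupling g)
    (hfp : ∀ i j k l, (((N : ℂ) + 18) / (N : ℂ)) * g i j k l =
      cP (fun a b c d => cflat g g a b c d + 4 * csharp g g a b c d) i j k l
        + 54 / (N : ℂ) ^ 2 * Tdelta i j k l) :
    90 + 24 * Real.sqrt 15 ≤ (N : ℝ) ∧ 183 ≤ N := by
  have hquad : 180 * (N : ℝ) + 540 ≤ (N : ℝ) ^ 2 :=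
    le_sq_of_traced_fixedPoint (by exact_mod_cast hN) (hg.traced_fixedPoint hN hfp)
      (two_mul_sq_ctrace_le_mul_csqnorm hg.2.1) (sq_ctrace_le_mul_cpartialTraceSqNorm g)
  exact ⟨ninety_add_le_of_le_sq N.cast_nonneg hquad, le_183_of_le_sq hquad⟩
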